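/- Let N be a positive integer and let α_1, …, α_N be real numbers with 0 ≤ α_i ≤ 1 for all i, such that the mean m(1) = (1/N)·Σ_i α_i satisfies 0 < m(1) < 1. For a real number x ≥ 1 define m(x) = (1/N)·Σ_i α_i^x and the cost function g(x) = (log(1/2) · x) / log(m(x)). Then for every real x ≥ 1 one has g(x) ≥ g(1); i.e., the cost for a successful false-accept attack is minimized for a single decoding iteration (D = 1). -/
import Mathlib


/-- The cost for a successful false-accept attack is minimized for a single
decoding iteration `D = 1`: for `g x = (log (1/2) * x) / log (m x)` with
`m x = (1/N) * ∑ i, (α i) ^ x` (real powers), `0 ≤ α i ≤ 1` and `0 < m 1 < 1`,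
one has `g x ≥ g 1` for every real `x ≥ 1`. -/
theorem false_accept_cost_minimized_at_one
    (N : ℕ) (hN : 0 < N) (α : Fin N → ℝ)
    (hα0 : ∀ i, 0 ≤ α i) (hα1 : ∀ i, α i ≤ 1)
    (m : ℝ → ℝ) (hm : ∀ x : ℝ, m x = (1 / (N : ℝ)) * ∑ i, α i ^ x)
    (hm1pos : 0 < m 1) (hm1lt : m 1 < 1)
    (g : ℝ → ℝ) (hg : ∀ x : ℝ, g x = (Real.log (1 / 2) * x) / Real.log (m x)) :
    ∀ x : ℝ, 1 ≤ x → g 1 ≤ g x := by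
  intro x hx
  have hNpos : (0 : ℝ) < N := Nat.cast_pos.mpr hN
  have hm1' : m 1 = (1 / (N : ℝ)) * ∑ i, α i := by
    rw [hm 1]; congr 1; exact Finset.sum_congr rfl fun i _ => Real.rpow_one _
  -- Jensen: m 1 ^ x ≤ m x
  have hconv : ConvexOn ℝ (Set.Ici (0:ℝ)) fun t => t ^ x := convexOn_rpow hx
  have hw : ∑ _i : Fin N, (1 / (N : ℝ)) = 1 := by
    simp [Finset.sum_const]
    field_simp
  have hjensen : m 1 ^ x ≤ m x := by
    have := hconv.map_sum_le (t := Finset.univ) (w := fun _ : Fin N => 1 / (N : ℝ))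
      (p := α) (fun i _ => by positivity) hw (fun i _ => hα0 i)
    simpa [hm1', hm x, smul_eq_mul, Finset.mul_sum] using this
  -- m x ≤ m 1
  have hle : m x ≤ m 1 := by
    rw [hm x, hm1']
    have : ∑ i, α i ^ x ≤ ∑ i, α i := by
      apply Finset.sum_le_sum
      intro i _
      rcases eq_or_lt_of_le (hα0 i) with h0 | h0
      · rw [← h0, Real.zero_rpow (by linarith : x ≠ 0)]
      · calc α i ^ x ≤ α i ^ (1:ℝ) :=
              Real.rpow_le_rpow_of_exponent_ge h0 (hα1 i) hx
          _ = α i := Real.rpow_one _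
    have h1N : (0:ℝ) < 1 / (N : ℝ) := by positivity
    nlinarith
  have hmxpos : 0 < m x := lt_of_lt_of_le (Real.rpow_pos_of_pos hm1pos x) hjensen
  have hmxlt : m x < 1 := lt_of_le_of_lt hle hm1lt
  have hlogmx : Real.log (m x) < 0 := Real.log_neg hmxpos hmxlt
  have hlogm1 : Real.log (m 1) < 0 := Real.log_neg hm1pos hm1lt
  have hlogh : Real.log (1/2 : ℝ) < 0 := Real.log_neg (by norm_num) (by norm_num)
  -- x * log (m 1) ≤ log (m x)
  have hkey : x * Real.log (m 1) ≤ Real.log (m x) := by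
    have := Real.log_le_log (Real.rpow_pos_of_pos hm1pos x) hjensen
    rwa [Real.log_rpow hm1pos] at this
  rw [hg 1, hg x]
  have e1 : Real.log (1/2) * 1 / Real.log (m 1)
      = (-(Real.log (1/2) * 1)) / (-(Real.log (m 1))) := (neg_div_neg_eq _ _).symm
  have e2 : Real.log (1/2) * x / Real.log (m x)
      = (-(Real.log (1/2) * x)) / (-(Real.log (m x))) := (neg_div_neg_eq _ _).symm
  rw [e1, e2, div_le_div_iff₀ (by linarith) (by linarith)]
  nlinarith [mul_le_mul_of_nonpos_left hkey (le_of_lt hlogh)]
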